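/- Let n, s ∈ ℤ with s ≥ 2 and 4s ≤ n + 1. Let Q(x) = Σ_{0 ≤ i,j ≤ n} a_{ij} x_i x_j be a quadratic form on ℝ^{n+1} with a_{ij} = a_{ji}, and suppose there exist c ∈ ℝ^{n+1} and r > 0 such that Q(v − c) = r for every v ∈ S(n,s) and Q(u − c) > r for every u ∈ V²_{n,s} \ S(n,s). Then there exists λ > 0 such that Q(x) = λ · q_{n,s}(x) for every x ∈ ℝ^{n+1} with Σ_{i=0}^n x_i = 0. That is, P(n,s) is a perfect Delaunay polytope: up to a positive multiple, q_{n,s} is the unique form for which P(n,s) is a Delaunay polytope of V²_{n,s}. -/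

import Mathlib

/-!
Write `Q x = xᵀ A x` with `A` symmetric and `𝟙_T = ∑ k ∈ T, Pi.single k 1`. The vertex set is
centrally symmetric about `v = v_{n,s}`, so for `#T = s - 1` and `i, j ∉ T` the four vertices
`𝟙_{T+i}`, `𝟙_{T+j}`, `2v - 𝟙_{T+i}`, `2v - 𝟙_{T+j}` on the sphere give, with the centre
eliminated, `(2 𝟙_T + e_i + e_j - 2v)ᵀ A (e_i - e_j) = 0`.
Varying `T` yields `(e_k - e_l)ᵀ A (e_i - e_j) = 0` for distinct `i, j, k, l`, so off the diagonal
`A i j = b i + b j`, and on `Σ x_i = 0` the form is `Σ d_i x_i²` with `d_i = A i i - 2 b i`.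
The same relation then says that `d_i (1 - 2 v_i)` does not depend on `i`, i.e. `d` is
proportional to `(2, …, 2, 1, …, 1)`. The constant is positive because the lattice point
`2 𝟙_{T+i} - 𝟙_{T+j}` lies strictly outside the sphere, which by the parallelogram law means
`Q (e_i - e_j) > 0`.
-/

open Finset

noncomputable section

/-- The lattice `A_n = {x ∈ ℤ^{n+1} : Σ x_i = 0}`, viewed inside `ℝ^{n+1}`. -/
def latticeA (n : ℕ) : Set (Fin (n+1) → ℝ) :=
  {x | (∀ i, ∃ m : ℤ, x i = m) ∧ ∑ i, x i = 0}

/-- The point lattice `V_{n,s} = {x ∈ ℤ^{n+1} : Σ x_i = s}`. -/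
def Vset (n s : ℕ) : Set (Fin (n+1) → ℝ) :=
  {x | (∀ i, ∃ m : ℤ, x i = m) ∧ ∑ i, x i = (s : ℝ)}

/-- The vertex set `W(n+1,s) = {x ∈ {0,1}^{n+1} : Σ x_i = s}`. -/
def Wset (n s : ℕ) : Set (Fin (n+1) → ℝ) :=
  {x | (∀ i, x i = 0 ∨ x i = 1) ∧ ∑ i, x i = (s : ℝ)}

/-- The vector `v_{n,s} = ((1/4)^{4s}; 0^{n+1-4s})`. -/
def vns (n s : ℕ) : Fin (n+1) → ℝ := fun i => if (i : ℕ) < 4 * s then 1 / 4 else 0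

/-- The vector `t_{n,s} = ((1/2)^{2s}; (−1/2)^{2s}; 0^{n+1-4s})`. -/
def tns (n s : ℕ) : Fin (n+1) → ℝ := fun i =>
  if (i : ℕ) < 2 * s then 1 / 2 else if (i : ℕ) < 4 * s then -(1 / 2) else 0

/-- The point lattice `V²_{n,s} = V_{n,s} ∪ (t_{n,s} + V_{n,s})`. -/
def V2 (n s : ℕ) : Set (Fin (n+1) → ℝ) :=
  Vset n s ∪ (fun x => tns n s + x) '' Vset n s

/-- The vertex set `S(n,s) = W(n+1,s) ∪ {2v_{n,s} − v : v ∈ W(n+1,s)}`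
of the polytope `P(n,s)`. -/
def Sns (n s : ℕ) : Set (Fin (n+1) → ℝ) :=
  Wset n s ∪ (fun v => (2 : ℝ) • vns n s - v) '' Wset n s

/-- The quadratic form `q_{n,s}(x) = 2 Σ_{i<4s} x_i² + Σ_{i≥4s} x_i²`. -/
def qns (n s : ℕ) (x : Fin (n+1) → ℝ) : ℝ :=
  ∑ i : Fin (n+1), (if (i : ℕ) < 4 * s then (2:ℝ) else 1) * (x i) ^ 2

open Matrix

namespace Matrix

section CommRing

variable {ι R : Type*} [Fintype ι] [CommRing R] {A : Matrix ι ι R}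

theorem IsSymm.dotProduct_mulVec_comm (hA : A.IsSymm) (x y : ι → R) :
    x ⬝ᵥ A *ᵥ y = y ⬝ᵥ A *ᵥ x := by
  rw [dotProduct_mulVec, ← hA.eq, vecMul_transpose, dotProduct_comm, hA.eq]

theorem IsSymm.dotProduct_mulVec_self_sub_self (hA : A.IsSymm) (x y : ι → R) :
    x ⬝ᵥ A *ᵥ x - y ⬝ᵥ A *ᵥ y = (x + y) ⬝ᵥ A *ᵥ (x - y) := by
  rw [add_dotProduct, mulVec_sub, dotProduct_sub, dotProduct_sub, hA.dotProduct_mulVec_comm y x]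
  ring

theorem parallelogram_law_dotProduct_mulVec (A : Matrix ι ι R) (x y : ι → R) :
    (x + y) ⬝ᵥ A *ᵥ (x + y) + (x - y) ⬝ᵥ A *ᵥ (x - y)
      = 2 * (x ⬝ᵥ A *ᵥ x) + 2 * (y ⬝ᵥ A *ᵥ y) := by
  simp only [add_dotProduct, sub_dotProduct, mulVec_add, mulVec_sub, dotProduct_add,
    dotProduct_sub]
  ring

variable [DecidableEq ι]

theorem single_sub_single_dotProduct_mulVec (A : Matrix ι ι R) (i j k l : ι) :
    (Pi.single k 1 - Pi.single l 1) ⬝ᵥ A *ᵥ (Pi.single i 1 - Pi.single j 1)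
      = A k i - A k j - A l i + A l j := by
  simp [mulVec_sub, sub_dotProduct, dotProduct_sub]
  ring

theorem dotProduct_mulVec_of_offDiag_eq_add {b : ι → R}
    (hb : ∀ i j, i ≠ j → A i j = b i + b j) {x y : ι → R} (hx : ∑ i, x i = 0)
    (hy : ∑ i, y i = 0) : y ⬝ᵥ A *ᵥ x = ∑ i, (A i i - 2 * b i) * y i * x i := by
  set d : ι → R := fun i => A i i - 2 * b i
  have hA : ∀ i j, A i j = b i + b j + if i = j then d i else 0 := by
    intro i j
    split_ifs with h
    · subst h; ring
    · rw [hb i j h, add_zero]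
  simp only [dotProduct, mulVec, hA, add_mul, mul_add, Finset.sum_add_distrib, ite_mul, zero_mul,
    Finset.sum_ite_eq, Finset.mem_univ, if_true, ← Finset.mul_sum, ← Finset.sum_mul, hx, hy,
    mul_zero, zero_add]
  exact Finset.sum_congr rfl fun i _ => by ring

end CommRing

variable {ι : Type*} {A : Matrix ι ι ℝ}

theorem IsSymm.dotProduct_mulVec_sub_eq_zero_of_reflect [Fintype ι] (hA : A.IsSymm)
    {v w m c : ι → ℝ} (h₁ : (v - c) ⬝ᵥ A *ᵥ (v - c) = (w - c) ⬝ᵥ A *ᵥ (w - c))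
    (h₂ : ((2 : ℝ) • m - v - c) ⬝ᵥ A *ᵥ ((2 : ℝ) • m - v - c)
      = ((2 : ℝ) • m - w - c) ⬝ᵥ A *ᵥ ((2 : ℝ) • m - w - c)) :
    (v + w - (2 : ℝ) • m) ⬝ᵥ A *ᵥ (v - w) = 0 := by
  rw [← sub_eq_zero, hA.dotProduct_mulVec_self_sub_self, sub_sub_sub_cancel_right] at h₁
  rw [← sub_eq_zero, hA.dotProduct_mulVec_self_sub_self,
    show (2 : ℝ) • m - v - c - ((2 : ℝ) • m - w - c) = -(v - w) by abel,
    mulVec_neg, dotProduct_neg, neg_eq_zero] at h₂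
  rw [show v + w - (2 : ℝ) • m = (1 / 2 : ℝ) •
      ((v - c + (w - c)) - ((2 : ℝ) • m - v - c + ((2 : ℝ) • m - w - c))) by module,
    smul_dotProduct, sub_dotProduct, h₁, h₂, sub_self, smul_zero]

/-- The pivot `p` works because `A i p + A j p - A i j` takes the same value `2 b p` on all pairs
`i ≠ j` avoiding `p`. -/
theorem IsSymm.exists_offDiag_eq_add (hA : A.IsSymm)
    (h4 : ∀ i j k l, i ≠ j → i ≠ k → i ≠ l → j ≠ k → j ≠ l → k ≠ l →
      A k i - A k j - A l i + A l j = 0)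
    {p i₁ i₂ : ι} (hp₁ : p ≠ i₁) (hp₂ : p ≠ i₂) (h₁₂ : i₁ ≠ i₂) :
    ∃ b : ι → ℝ, ∀ i j, i ≠ j → A i j = b i + b j := by
  classical
  set g : ι → ι → ℝ := fun i j => A i p + A j p - A i j
  have hg_comm : ∀ i j, g i j = g j i := fun i j => by simp only [g, hA.apply]; ring
  have hg : ∀ i j k, i ≠ j → i ≠ k → i ≠ p → j ≠ p → k ≠ p → g i j = g i k := by
    intro i j k hij hik hip hjp hkp
    rcases eq_or_ne j k with rfl | hjk
    · rfl
    · have := h4 p i j k hip.symm hjp.symm hkp.symm hij hik hjk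
      simp only [g]
      linarith [hA.apply i j, hA.apply i k, hA.apply p j, hA.apply p k]
  have hg_const : ∀ i j, i ≠ j → i ≠ p → j ≠ p → g i j = g i₁ i₂ := by
    intro i j hij hip hjp
    rcases eq_or_ne i i₁ with rfl | hi₁
    · exact hg i j i₂ hij h₁₂ hip hjp hp₂.symm
    · rw [hg i j i₁ hij hi₁ hip hjp hp₁.symm, hg_comm,
        hg i₁ i i₂ hi₁.symm h₁₂ hp₁.symm hip hp₂.symm]
  refine ⟨fun i => if i = p then g i₁ i₂ / 2 else A i p - g i₁ i₂ / 2, fun i j hij => ?_⟩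
  rcases eq_or_ne i p with rfl | hip
  · simp [hij.symm, hA.apply]
  rcases eq_or_ne j p with rfl | hjp
  · simp [hij]
  have := hg_const i j hij hip hjp
  simp only [g] at this
  simp only [hip, hjp, if_false]
  linarith

end Matrix

theorem Finset.exists_card_eq_disjoint {ι : Type*} [Fintype ι] [DecidableEq ι] (F : Finset ι)
    {m : ℕ} (hm : m + #F ≤ Fintype.card ι) : ∃ T : Finset ι, #T = m ∧ Disjoint T F := by
  obtain ⟨T, hTF, hT⟩ := exists_subset_card_eq (s := Fᶜ) (n := m) (by rw [card_compl]; omega)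
  exact ⟨T, hT, subset_compl_iff_disjoint_right.mp hTF⟩

theorem Finset.sum_single_one_apply {ι R : Type*} [DecidableEq ι] [AddCommMonoid R] [One R]
    (T : Finset ι) (i : ι) : (∑ k ∈ T, Pi.single k (1 : R)) i = if i ∈ T then 1 else 0 := by
  rw [sum_apply]
  exact sum_pi_single i (fun _ => (1 : R)) T

section Pns

variable {n s : ℕ}

theorem sum_single_mem_Wset {T : Finset (Fin (n+1))} (hT : #T = s) :
    ∑ k ∈ T, Pi.single k (1 : ℝ) ∈ Wset n s := by
  refine ⟨fun i => ?_, ?_⟩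
  · rw [sum_single_one_apply]
    split_ifs <;> simp
  · simp only [Finset.sum_apply]
    rw [Finset.sum_comm]
    simp [hT]

theorem two_smul_sub_mem_Vset {v w : Fin (n+1) → ℝ} (hv : v ∈ Wset n s) (hw : w ∈ Wset n s) :
    (2 : ℝ) • v - w ∈ Vset n s := by
  refine ⟨fun i => ?_, ?_⟩
  · rcases hv.1 i with h | h <;> rcases hw.1 i with h' | h' <;>
      simp only [Pi.sub_apply, Pi.smul_apply, smul_eq_mul, h, h']
    exacts [⟨0, by norm_num⟩, ⟨-1, by norm_num⟩, ⟨2, by norm_num⟩, ⟨1, by norm_num⟩]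
  · simp only [Pi.sub_apply, Pi.smul_apply, smul_eq_mul, Finset.sum_sub_distrib, ← Finset.mul_sum,
      hv.2, hw.2]
    ring

theorem sum_vns (h4s : 4 * s ≤ n + 1) : ∑ k, vns n s k = s := by
  simp only [vns]
  rw [Fin.sum_univ_eq_sum_range (fun m => if m < 4 * s then (1 / 4 : ℝ) else 0), Finset.sum_ite,
    Finset.sum_const_zero, add_zero, Finset.sum_const,
    show (range (n + 1)).filter (· < 4 * s) = range (4 * s) by ext; simp; omega,
    Finset.card_range, nsmul_eq_mul]
  push_cast; ring

theorem vns_of_lt {i : Fin (n+1)} (hi : (i : ℕ) < 4 * s) : vns n s i = 1 / 4 := if_pos hi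

theorem apply_le_one_of_mem_Sns {v : Fin (n+1) → ℝ} (hv : v ∈ Sns n s) (i : Fin (n+1)) :
    v i ≤ 1 := by
  rcases hv with hv | ⟨w, hw, rfl⟩
  · rcases hv.1 i with h | h <;> norm_num [h]
  · have : vns n s i ≤ 1 / 4 := by unfold vns; split_ifs <;> norm_num
    rcases hw.1 i with h | h <;> simp [h] <;> linarith

namespace Sns

variable {A : Matrix (Fin (n+1)) (Fin (n+1)) ℝ} {c : Fin (n+1) → ℝ} {r : ℝ}

theorem orthogonal_of_swap (hA : A.IsSymm)
    (heq : ∀ v ∈ Sns n s, (v - c) ⬝ᵥ A *ᵥ (v - c) = r)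
    {T : Finset (Fin (n+1))} (hT : #T + 1 = s) {i j : Fin (n+1)} (hi : i ∉ T) (hj : j ∉ T) :
    ((2 : ℝ) • ∑ k ∈ T, Pi.single k 1 + Pi.single i 1 + Pi.single j 1 - (2 : ℝ) • vns n s) ⬝ᵥ
      A *ᵥ (Pi.single i 1 - Pi.single j 1) = 0 := by
  have hv := sum_single_mem_Wset (s := s) (by rw [card_insert_of_notMem hi, hT])
  have hw := sum_single_mem_Wset (s := s) (by rw [card_insert_of_notMem hj, hT])
  have key := hA.dotProduct_mulVec_sub_eq_zero_of_reflect (m := vns n s)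
    ((heq _ (Or.inl hv)).trans (heq _ (Or.inl hw)).symm)
    ((heq _ (Or.inr ⟨_, hv, rfl⟩)).trans (heq _ (Or.inr ⟨_, hw, rfl⟩)).symm)
  rw [sum_insert hi, sum_insert hj] at key
  convert key using 3 <;> module

theorem four_point_relation (hA : A.IsSymm)
    (heq : ∀ v ∈ Sns n s, (v - c) ⬝ᵥ A *ᵥ (v - c) = r) (hs : 2 ≤ s) (hsn : s + 2 ≤ n + 1)
    {i j k l : Fin (n+1)} (hik : i ≠ k) (hil : i ≠ l) (hjk : j ≠ k) (hjl : j ≠ l) :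
    A k i - A k j - A l i + A l j = 0 := by
  obtain ⟨T, hT, hTdisj⟩ := exists_card_eq_disjoint {i, j, k, l} (m := s - 2)
    (by rw [Fintype.card_fin]; have := card_le_four (a := i) (b := j) (c := k) (d := l); omega)
  simp only [disjoint_insert_right, disjoint_singleton_right] at hTdisj
  obtain ⟨hiT, hjT, hkT, hlT⟩ := hTdisj
  have hk := orthogonal_of_swap hA heq (T := insert k T) (i := i) (j := j)
    (by rw [card_insert_of_notMem hkT]; omega) (by simp [hik, hiT]) (by simp [hjk, hjT])
  have hl := orthogonal_of_swap hA heq (T := insert l T) (i := i) (j := j)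
    (by rw [card_insert_of_notMem hlT]; omega) (by simp [hil, hiT]) (by simp [hjl, hjT])
  rw [sum_insert hkT] at hk
  rw [sum_insert hlT] at hl
  rw [← single_sub_single_dotProduct_mulVec]
  simp only [add_dotProduct, sub_dotProduct, smul_dotProduct, smul_add, smul_eq_mul] at hk hl ⊢
  linear_combination (hk - hl) / 2

theorem diag_relation (hA : A.IsSymm) (heq : ∀ v ∈ Sns n s, (v - c) ⬝ᵥ A *ᵥ (v - c) = r)
    (hs : 1 ≤ s) (h4s : 4 * s ≤ n + 1) {b : Fin (n+1) → ℝ}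
    (hb : ∀ i j, i ≠ j → A i j = b i + b j) {i j : Fin (n+1)} (hij : i ≠ j) :
    (A i i - 2 * b i) * (1 - 2 * vns n s i) = (A j j - 2 * b j) * (1 - 2 * vns n s j) := by
  obtain ⟨T, hT, hTdisj⟩ := exists_card_eq_disjoint {i, j} (m := s - 1)
    (by rw [Fintype.card_fin]; have := card_le_two (a := i) (b := j); omega)
  simp only [disjoint_insert_right, disjoint_singleton_right] at hTdisj
  have key := orthogonal_of_swap hA heq (by omega) hTdisj.1 hTdisj.2
  rw [dotProduct_mulVec_of_offDiag_eq_add hb] at key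
  · simp only [Pi.sub_apply, mul_sub, Pi.single_apply, mul_ite, mul_one, mul_zero,
      Finset.sum_sub_distrib, Finset.sum_ite_eq', Finset.mem_univ, if_true, sub_eq_zero] at key
    simp only [Pi.add_apply, Pi.smul_apply, smul_eq_mul, sum_single_one_apply, hTdisj.1,
      hTdisj.2, if_false, Pi.single_eq_same, Pi.single_eq_of_ne hij,
      Pi.single_eq_of_ne hij.symm] at key
    linear_combination key
  · simp
  · simp [Finset.sum_add_distrib, ← Finset.mul_sum, Finset.sum_apply, sum_vns h4s]
    have : (#T : ℝ) + 1 = s := by exact_mod_cast (by omega : #T + 1 = s)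
    linarith

theorem single_sub_single_pos (heq : ∀ v ∈ Sns n s, (v - c) ⬝ᵥ A *ᵥ (v - c) = r)
    (hgt : ∀ u ∈ V2 n s \ Sns n s, r < (u - c) ⬝ᵥ A *ᵥ (u - c)) (hs : 1 ≤ s)
    (hsn : s + 1 ≤ n + 1) {i j : Fin (n+1)} (hij : i ≠ j) :
    0 < (Pi.single i 1 - Pi.single j 1) ⬝ᵥ A *ᵥ (Pi.single i 1 - Pi.single j 1) := by
  obtain ⟨T, hT, hTdisj⟩ := exists_card_eq_disjoint {i, j} (m := s - 1)
    (by rw [Fintype.card_fin]; have := card_le_two (a := i) (b := j); omega)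
  simp only [disjoint_insert_right, disjoint_singleton_right] at hTdisj
  set v := ∑ k ∈ insert i T, Pi.single k (1 : ℝ)
  set w := ∑ k ∈ insert j T, Pi.single k (1 : ℝ)
  have hv : v ∈ Wset n s := sum_single_mem_Wset (by rw [card_insert_of_notMem hTdisj.1]; omega)
  have hw : w ∈ Wset n s := sum_single_mem_Wset (by rw [card_insert_of_notMem hTdisj.2]; omega)
  have hvw : v - w = Pi.single i 1 - Pi.single j 1 := by
    simp only [v, w, sum_insert hTdisj.1, sum_insert hTdisj.2]; abel
  have hu : (2 : ℝ) • v - w ∉ Sns n s := fun h => by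
    have hui : ((2 : ℝ) • v - w) i = 2 := by simp [v, w, hTdisj.1, hij]
    linarith [apply_le_one_of_mem_Sns h i]
  have hout := hgt _ ⟨Or.inl (two_smul_sub_mem_Vset hv hw), hu⟩
  have hpar := parallelogram_law_dotProduct_mulVec A (v - c) (v - w)
  rw [show v - c + (v - w) = (2 : ℝ) • v - w - c by module, show v - c - (v - w) = w - c by abel,
    heq _ (Or.inl hv), heq _ (Or.inl hw), hvw] at hpar
  linarith

end Sns

end Pns

theorem Pns_perfect (n s : ℕ) (hs : 2 ≤ s) (h4s : 4 * s ≤ n + 1)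
    (a : Fin (n+1) → Fin (n+1) → ℝ) (hsym : ∀ i j, a i j = a j i)
    (Q : (Fin (n+1) → ℝ) → ℝ) (hQ : ∀ x, Q x = ∑ i, ∑ j, a i j * x i * x j)
    (c : Fin (n+1) → ℝ) (r : ℝ)
    (heq : ∀ v ∈ Sns n s, Q (v - c) = r)
    (hgt : ∀ u ∈ V2 n s \ Sns n s, r < Q (u - c)) :
    ∃ lam : ℝ, 0 < lam ∧
      ∀ x : Fin (n+1) → ℝ, ∑ i, x i = 0 → Q x = lam * qns n s x := by
  set A : Matrix (Fin (n+1)) (Fin (n+1)) ℝ := Matrix.of a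
  have hA : A.IsSymm := IsSymm.ext fun i j => hsym j i
  have hQA : ∀ x, Q x = x ⬝ᵥ A *ᵥ x := fun x => by
    simp only [hQ, dotProduct, mulVec, A, of_apply, Finset.mul_sum]
    exact Finset.sum_congr rfl fun i _ => Finset.sum_congr rfl fun j _ => by ring
  simp only [hQA] at heq hgt ⊢
  let i₀ : Fin (n+1) := ⟨0, by omega⟩
  let i₁ : Fin (n+1) := ⟨1, by omega⟩
  let i₂ : Fin (n+1) := ⟨2, by omega⟩
  obtain ⟨b, hb⟩ := hA.exists_offDiag_eq_add
    (fun _ _ _ _ _ hik hil hjk hjl _ => Sns.four_point_relation hA heq hs (by omega) hik hil hjk hjl)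
    (p := i₀) (i₁ := i₁) (i₂ := i₂) (by simp [i₀, i₁, Fin.ext_iff])
    (by simp [i₀, i₂, Fin.ext_iff]) (by simp [i₁, i₂, Fin.ext_iff])
  set lam := (A i₀ i₀ - 2 * b i₀) * (1 - 2 * vns n s i₀)
  have hd : ∀ i, (A i i - 2 * b i) * (1 - 2 * vns n s i) = lam := fun i => by
    rcases eq_or_ne i i₀ with rfl | hi
    · rfl
    · exact Sns.diag_relation hA heq (by omega) h4s hb hi
  refine ⟨lam, ?_, fun x hx => ?_⟩
  · have h₀₁ : i₀ ≠ i₁ := by simp [i₀, i₁, Fin.ext_iff]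
    have hpos := Sns.single_sub_single_pos heq hgt (by omega) (by omega) h₀₁
    rw [single_sub_single_dotProduct_mulVec, hb i₀ i₁ h₀₁, hb i₁ i₀ h₀₁.symm] at hpos
    have h₀ := hd i₀
    have h₁ := hd i₁
    rw [vns_of_lt (by simp [i₀]; omega)] at h₀
    rw [vns_of_lt (by simp [i₁]; omega)] at h₁
    linarith
  · rw [dotProduct_mulVec_of_offDiag_eq_add hb hx hx, qns, Finset.mul_sum]
    refine Finset.sum_congr rfl fun i _ => ?_
    have hi := hd i
    simp only [vns] at hi
    split_ifs at hi ⊢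
    · linear_combination 2 * x i ^ 2 * hi
    · linear_combination x i ^ 2 * hi
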